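/- One has (U^{(ε)})² = (W_J(τ^{(ε)2}) / τ^{(ε)}(w_J)) · U^{(ε)}, where W_J(τ^{(ε)2}) := ∑_{w∈W_J} τ^{(ε)}(w)². Moreover, if * : H → H is an involutive ring anti-automorphism that is semilinear over an involutive field automorphism * of K satisfying τ(w)* = τ(w)^{-1} for all w ∈ W_J, and if T(w)* = T(w)^{-1} for all w ∈ W_J, then (U^{(ε)})* = U^{(ε)}. -/

import Mathlib

/-!
Write `S := ∑ w, τ(w) T(w)`, so that `U = τ(w_J)⁻¹ S`. For a simple reflection `s`, pairing each
`w` with `s w` factors `S = (1 + τ_s T_s) X`, and the quadratic relation gives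
`T_s (1 + τ_s T_s) = τ_s (1 + τ_s T_s)`; inducting on length, `T(w) S = τ(w) S = S T(w)` for every
`w`, whence `S² = (∑ w, τ(w)²) S`. The quadratic relation is invariant under `τ_s ↦ -τ_s⁻¹`, so
all of this applies to `τ^{(ε)}` in place of `τ`.

For the adjoint, `S* = ∑ w, τ(w)⁻¹ T(w)⁻¹`. Lengths add in `w_J = w · (w⁻¹ w_J)`, hence
`T(w)⁻¹ = T(w⁻¹ w_J) T(w_J)⁻¹`, and reindexing gives `S* = S T(w_J)⁻¹ τ(w_J)⁻¹ = τ(w_J)⁻² S`.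
The additivity of lengths at the longest element comes from counting right inversions with the
sign cocycle of the permutation representation of `W` on `W × {±1}` used to prove the strong
exchange condition: when `x y` is longest, the right inversions of `y` and the conjugates
`y⁻¹ r y` of the right inversions `r` of `x` are disjoint sets of right inversions of `x y`.
-/

open List

theorem Fintype.sum_eq_sum_filter_add_comp_of_involutive {α A : Type*} [Fintype α]
    [AddCommMonoid A] (p : α → Prop) [DecidablePred p] {g : α → α} (hg : g.Involutive)
    (hp : ∀ a, p (g a) ↔ ¬p a) (f : α → A) :
    ∑ a, f a = ∑ a with p a, (f a + f (g a)) := by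
  rw [Finset.sum_add_distrib, ← Finset.sum_filter_add_sum_filter_not Finset.univ p f]
  congr 1
  exact Finset.sum_nbij' g g (by simp [hp]) (by simp [hp]) (fun a _ => hg a) (fun a _ => hg a)
    (fun a _ => by rw [hg])

namespace CoxeterSystem

variable {B W : Type*} [Group W] {M : CoxeterMatrix B} (cs : CoxeterSystem M W)

local prefix:100 "s" => cs.simple
local prefix:100 "π" => cs.wordProd
local prefix:100 "ℓ" => cs.length
local prefix:100 "ris " => cs.rightInvSeq
local prefix:100 "lis " => cs.leftInvSeq

theorem induction_on_length_left {p : W → Prop} (one : p 1)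
    (simple_mul : ∀ w i, ℓ (s i * w) = ℓ w + 1 → p w → p (s i * w)) (w : W) : p w := by
  obtain ⟨ω, hω, rfl⟩ := cs.exists_isReduced w
  induction ω with
  | nil => simpa using one
  | cons i ω ih =>
    have hω' : cs.IsReduced ω := by simpa using hω.drop 1
    have hlen := hω.eq
    rw [wordProd_cons] at hlen ⊢
    exact simple_mul _ i (by rw [hlen, hω'.eq, length_cons]) (ih hω')

theorem induction_on_length_right {p : W → Prop} (one : p 1)
    (mul_simple : ∀ w i, ℓ (w * s i) = ℓ w + 1 → p w → p (w * s i)) (w : W) : p w := by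
  have hinv : ∀ w i, (s i * w)⁻¹ = w⁻¹ * s i := fun w i => by rw [mul_inv_rev, inv_simple]
  simpa using cs.induction_on_length_left (p := fun w => p w⁻¹) (by simpa using one)
    (fun w i hw hp => hinv w i ▸ mul_simple w⁻¹ i
      (by rw [← hinv, length_inv, length_inv, hw]) hp) w⁻¹

theorem prod_map_reverse_alternatingWord {G : Type*} [Monoid G] (f : B → G) (i i' : B)
    (m : ℕ) : ((alternatingWord i' i (2 * m)).reverse.map f).prod = (f i * f i') ^ m := by
  induction m with
  | zero => simp [alternatingWord]
  | succ m ih =>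
    rw [show 2 * (m + 1) = 2 * m + 1 + 1 by ring, alternatingWord_succ', alternatingWord_succ']
    simp only [parity_simps, even_two, Even.mul_right, if_true, reverse_cons, map_append,
      prod_append, ih]
    simp [pow_succ, mul_assoc]

theorem leftInvSeq_alternatingWord (i i' : B) (m : ℕ) :
    lis (alternatingWord i' i (2 * m)) =
      (range (2 * m)).map (fun k => s i' * (s i * s i') ^ k) := by
  refine ext_getElem (by simp) fun k hk _ => ?_
  rw [getElem_leftInvSeq_alternatingWord cs i' i m k (by simpa using hk),
    prod_alternatingWord_eq_mul_pow]
  simp [parity_simps, Nat.add_div_of_dvd_right]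

section ReflectionRepresentation

variable [DecidableEq W]

def reflectionFlip (i : B) : Equiv.Perm (W × ℤˣ) :=
  Function.Involutive.toPerm
    (fun p => (s i * p.1 * s i, if p.1 = s i then -p.2 else p.2))
    (by
      rintro ⟨t, e⟩
      have hconj : s i * (s i * t * s i) * s i = t := by
        simp [mul_assoc, cs.simple_mul_simple_cancel_left]
      have hfix : s i * t * s i = s i ↔ t = s i := by
        constructor
        · intro h; rw [← hconj, h]; simp [cs.simple_mul_simple_self]
        · rintro rfl; simp [cs.simple_mul_simple_self]
      by_cases ht : t = s i <;> simp [hconj, hfix, ht])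

theorem reflectionFlip_apply (i : B) (p : W × ℤˣ) :
    cs.reflectionFlip i p = (s i * p.1 * s i, if p.1 = s i then -p.2 else p.2) :=
  rfl

theorem prod_map_reflectionFlip_apply (ω : List B) (t : W) (e : ℤˣ) :
    (ω.map cs.reflectionFlip).prod (t, e) =
      (π ω * t * (π ω)⁻¹, e * (-1) ^ (ris ω).count t) := by
  induction ω with
  | nil => simp
  | cons i ω ih =>
    have hcond : π ω * t * (π ω)⁻¹ = s i ↔ (π ω)⁻¹ * s i * π ω = t := by
      constructor <;> intro h
      · rw [← h]; group
      · rw [← h]; group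
    simp only [map_cons, prod_cons, Equiv.Perm.mul_apply, ih, reflectionFlip_apply,
      rightInvSeq, count_cons, beq_iff_eq, hcond, wordProd_cons, mul_inv_rev, inv_simple,
      Prod.mk.injEq]
    refine ⟨by group, ?_⟩
    split_ifs <;> simp [pow_succ]

theorem even_count_rightInvSeq_reverse_alternatingWord (i i' : B) (t : W) :
    Even ((ris (alternatingWord i' i (2 * M i i')).reverse).count t) := by
  have hperiodic : ∀ k, s i' * (s i * s i') ^ (M i i' + k) = s i' * (s i * s i') ^ k := by
    intro k; rw [pow_add, simple_mul_simple_pow, one_mul]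
  rw [rightInvSeq_reverse, count_reverse, leftInvSeq_alternatingWord, two_mul, range_add,
    map_append, map_map]
  simp only [Function.comp_def, hperiodic, count_append]
  exact ⟨_, rfl⟩

theorem isLiftable_reflectionFlip : M.IsLiftable cs.reflectionFlip := by
  intro i i'
  rw [← prod_map_reverse_alternatingWord]
  ext ⟨t, e⟩ : 1
  rw [prod_map_reflectionFlip_apply, wordProd_reverse, prod_alternatingWord_eq_mul_pow,
    Nat.mul_div_cancel_left _ two_pos, simple_mul_simple_pow',
    (cs.even_count_rightInvSeq_reverse_alternatingWord i i' t).neg_one_pow]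
  simp

noncomputable def reflectionRep : W →* Equiv.Perm (W × ℤˣ) :=
  cs.lift ⟨cs.reflectionFlip, cs.isLiftable_reflectionFlip⟩

theorem reflectionRep_wordProd (ω : List B) :
    cs.reflectionRep (π ω) = (ω.map cs.reflectionFlip).prod := by
  simp [wordProd, map_list_prod, reflectionRep, Function.comp_def]

noncomputable def reflectionSign (w t : W) : ℤˣ := (cs.reflectionRep w (t, 1)).2

theorem reflectionSign_wordProd (ω : List B) (t : W) :
    cs.reflectionSign (π ω) t = (-1) ^ (ris ω).count t := by
  simp [reflectionSign, reflectionRep_wordProd, prod_map_reflectionFlip_apply]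

theorem reflectionRep_apply (w t : W) (e : ℤˣ) :
    cs.reflectionRep w (t, e) = (w * t * w⁻¹, e * cs.reflectionSign w t) := by
  obtain ⟨ω, rfl⟩ := cs.wordProd_surjective w
  simp [reflectionSign_wordProd, reflectionRep_wordProd, prod_map_reflectionFlip_apply]

theorem reflectionSign_mul (x y t : W) :
    cs.reflectionSign (x * y) t = cs.reflectionSign y t * cs.reflectionSign x (y * t * y⁻¹) := by
  have h := congrArg Prod.snd (cs.reflectionRep_apply (x * y) t 1)
  rw [map_mul, Equiv.Perm.mul_apply, reflectionRep_apply, reflectionRep_apply] at h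
  simpa using h.symm

theorem reflectionSign_one (t : W) : cs.reflectionSign 1 t = 1 := by
  simpa using cs.reflectionSign_wordProd [] t

theorem reflectionSign_simple_self (i : B) : cs.reflectionSign (s i) (s i) = -1 := by
  simpa using cs.reflectionSign_wordProd [i] (s i)

theorem reflectionSign_self {t : W} (ht : cs.IsReflection t) : cs.reflectionSign t t = -1 := by
  obtain ⟨u, i, rfl⟩ := ht
  have hconj : u⁻¹ * (u * s i * u⁻¹) * u⁻¹⁻¹ = s i := by group
  have hu := cs.reflectionSign_mul u u⁻¹ (u * s i * u⁻¹)
  rw [mul_inv_cancel, reflectionSign_one, hconj] at hu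
  have h := cs.reflectionSign_mul (u * s i) u⁻¹ (u * s i * u⁻¹)
  rw [hconj, cs.reflectionSign_mul u (s i), show s i * s i * (s i)⁻¹ = s i by group,
    reflectionSign_simple_self] at h
  rw [h, neg_one_mul, mul_neg, ← hu]

theorem reflectionSign_wordProd_eq_neg_one_iff {ω : List B} (hω : cs.IsReduced ω) (t : W) :
    cs.reflectionSign (π ω) t = -1 ↔ t ∈ ris ω := by
  rw [reflectionSign_wordProd]
  by_cases ht : t ∈ ris ω
  · simp [ht, count_eq_one_of_mem hω.nodup_rightInvSeq ht]
  · simp [ht, count_eq_zero_of_not_mem ht]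

theorem isRightInversion_of_reflectionSign_eq_neg_one {w t : W}
    (h : cs.reflectionSign w t = -1) : cs.IsRightInversion w t := by
  obtain ⟨ω, hω, rfl⟩ := cs.exists_isReduced w
  exact cs.isRightInversion_of_mem_rightInvSeq hω
    ((cs.reflectionSign_wordProd_eq_neg_one_iff hω t).mp h)

theorem reflectionSign_eq_neg_one_iff {w t : W} (ht : cs.IsReflection t) :
    cs.reflectionSign w t = -1 ↔ cs.IsRightInversion w t := by
  refine ⟨cs.isRightInversion_of_reflectionSign_eq_neg_one, fun hwt => ?_⟩
  have hsign : cs.reflectionSign (w * t) t = 1 := by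
    refine (Int.units_eq_one_or _).resolve_right fun h => ?_
    have := (cs.isRightInversion_of_reflectionSign_eq_neg_one h).2
    rw [mul_assoc, ht.mul_self, mul_one] at this
    exact lt_asymm this hwt.2
  have h := cs.reflectionSign_mul (w * t) t t
  rwa [mul_assoc, ht.mul_self, mul_one, one_mul, ht.inv, reflectionSign_self cs ht,
    hsign, mul_one] at h

end ReflectionRepresentation

theorem setOf_isRightInversion_wordProd {ω : List B} (hω : cs.IsReduced ω) :
    {t | cs.IsRightInversion (π ω) t} = {t | t ∈ ris ω} := by
  classical
  ext t
  refine ⟨fun ht => ?_, cs.isRightInversion_of_mem_rightInvSeq hω⟩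
  exact (cs.reflectionSign_wordProd_eq_neg_one_iff hω t).mp
    ((cs.reflectionSign_eq_neg_one_iff ht.1).mpr ht)

theorem finite_setOf_isRightInversion (w : W) : {t | cs.IsRightInversion w t}.Finite := by
  obtain ⟨ω, hω, rfl⟩ := cs.exists_isReduced w
  rw [cs.setOf_isRightInversion_wordProd hω]
  exact (ris ω).finite_toSet

theorem ncard_setOf_isRightInversion (w : W) : {t | cs.IsRightInversion w t}.ncard = ℓ w := by
  classical
  obtain ⟨ω, hω, rfl⟩ := cs.exists_isReduced w
  rw [cs.setOf_isRightInversion_wordProd hω, ← coe_toFinset, Set.ncard_coe_finset,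
    toFinset_card_of_nodup hω.nodup_rightInvSeq, length_rightInvSeq, hω.eq]

theorem isRightInversion_of_forall_length_le {u t : W} (hu : ∀ w, ℓ w ≤ ℓ u)
    (ht : cs.IsReflection t) : cs.IsRightInversion u t :=
  ⟨ht, (hu (u * t)).lt_of_ne (ht.length_mul_left_ne u)⟩

theorem length_mul_of_forall_length_le {x y : W} (hxy : ∀ w, ℓ w ≤ ℓ (x * y)) :
    ℓ (x * y) = ℓ x + ℓ y := by
  classical
  set invY := {t | cs.IsRightInversion y t}
  set invX := (fun r => y⁻¹ * r * y) '' {r | cs.IsRightInversion x r}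
  have hdisj : Disjoint invY invX := by
    refine Set.disjoint_left.mpr ?_
    rintro _ hy ⟨r, hx, rfl⟩
    have hxy' := cs.isRightInversion_of_forall_length_le hxy hy.1
    have hsign := cs.reflectionSign_mul x y (y⁻¹ * r * y)
    rw [show y * (y⁻¹ * r * y) * y⁻¹ = r by group, (cs.reflectionSign_eq_neg_one_iff hy.1).mpr hy,
      (cs.reflectionSign_eq_neg_one_iff hx.1).mpr hx,
      (cs.reflectionSign_eq_neg_one_iff hy.1).mpr hxy'] at hsign
    exact absurd hsign (by decide)
  have hsub : invY ∪ invX ⊆ {t | cs.IsRightInversion (x * y) t} := by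
    rintro t (hy | ⟨r, hx, rfl⟩)
    · exact cs.isRightInversion_of_forall_length_le hxy hy.1
    · refine cs.isRightInversion_of_forall_length_le hxy ?_
      simpa using hx.1.conj y⁻¹
  have hcardX : invX.ncard = ℓ x := by
    rw [Set.ncard_image_of_injective _ (fun a b h => by simpa using h),
      ncard_setOf_isRightInversion]
  refine le_antisymm (cs.length_mul_le x y) ?_
  calc ℓ x + ℓ y = (invY ∪ invX).ncard := by
        rw [Set.ncard_union_eq hdisj (cs.finite_setOf_isRightInversion y)
          ((cs.finite_setOf_isRightInversion x).image _), hcardX, ncard_setOf_isRightInversion,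
          add_comm]
    _ ≤ ℓ (x * y) := by
        rw [← ncard_setOf_isRightInversion]
        exact Set.ncard_le_ncard hsub (cs.finite_setOf_isRightInversion _)

end CoxeterSystem

section HeckeSymmetriser

open CoxeterSystem

variable {B W : Type*} [Group W] {M : CoxeterMatrix B} {cs : CoxeterSystem M W}

variable (cs) in
def IsMultiplicativeLabelling {G : Type*} [Monoid G] (P : W → G) : Prop :=
  ∀ v w, cs.length (v * w) = cs.length v + cs.length w → P (v * w) = P v * P w

namespace IsMultiplicativeLabelling

variable {G : Type*} [Group G] {P Q : W → G}

theorem map_one (hP : IsMultiplicativeLabelling cs P) : P 1 = 1 := by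
  simpa using hP 1 1 (by simp)

theorem map_simple_mul (hP : IsMultiplicativeLabelling cs P) {w : W} {i : B}
    (h : cs.length (cs.simple i * w) = cs.length w + 1) :
    P (cs.simple i * w) = P (cs.simple i) * P w :=
  hP _ _ (by rw [h, length_simple, add_comm])

theorem map_mul_simple (hP : IsMultiplicativeLabelling cs P) {w : W} {i : B}
    (h : cs.length (w * cs.simple i) = cs.length w + 1) :
    P (w * cs.simple i) = P w * P (cs.simple i) :=
  hP _ _ (by rw [h, length_simple])

theorem ext (hP : IsMultiplicativeLabelling cs P) (hQ : IsMultiplicativeLabelling cs Q)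
    (h : ∀ i, P (cs.simple i) = Q (cs.simple i)) : P = Q :=
  funext <| cs.induction_on_length_left (by rw [hP.map_one, hQ.map_one])
    fun w i hw hPQ => by rw [hP.map_simple_mul hw, hQ.map_simple_mul hw, h, hPQ]

theorem comp {G' : Type*} [Group G'] (hP : IsMultiplicativeLabelling cs P) (f : G →* G') :
    IsMultiplicativeLabelling cs (f ∘ P) :=
  fun v w h => by simp [hP v w h]

theorem inv {G : Type*} [CommGroup G] {P : W → G} (hP : IsMultiplicativeLabelling cs P) :
    IsMultiplicativeLabelling cs (fun w => (P w)⁻¹) :=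
  fun v w h => by simp [hP v w h, mul_comm]

theorem inv_eq_mul_inv_of_forall_length_le (hP : IsMultiplicativeLabelling cs P) {u : W}
    (hu : ∀ w, cs.length w ≤ cs.length u) (w : W) : (P w)⁻¹ = P (w⁻¹ * u) * (P u)⁻¹ := by
  have hwu : w * (w⁻¹ * u) = u := mul_inv_cancel_left w u
  have hsplit := hP w (w⁻¹ * u) (cs.length_mul_of_forall_length_le (by rwa [hwu]))
  rw [hwu] at hsplit
  rw [hsplit, mul_inv_rev, mul_inv_cancel_left]

end IsMultiplicativeLabelling

variable {K : Type*} [Field K] {H : Type*} [Ring H] [Algebra K H]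

theorem mul_one_add_smul_of_quadratic {x : H} {a : Kˣ}
    (hx : (x - algebraMap K H a) * (x + algebraMap K H (a⁻¹ : Kˣ)) = 0) :
    x * (1 + (a : K) • x) = (a : K) • (1 + (a : K) • x) := by
  have ha : (a : K) * (a⁻¹ : Kˣ) = 1 := a.mul_inv
  simp only [Algebra.algebraMap_eq_smul_one, sub_mul, mul_add, smul_mul_assoc, mul_smul_comm,
    one_mul, mul_one] at hx
  simp only [mul_add, mul_one, mul_smul_comm]
  linear_combination (norm := module) (a : K) • hx - ha • (x - (a : K) • (1 : H))

theorem one_add_smul_mul_of_quadratic {x : H} {a : Kˣ}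
    (hx : (x - algebraMap K H a) * (x + algebraMap K H (a⁻¹ : Kˣ)) = 0) :
    (1 + (a : K) • x) * x = (a : K) • (1 + (a : K) • x) := by
  have ha : (a : K) * (a⁻¹ : Kˣ) = 1 := a.mul_inv
  simp only [Algebra.algebraMap_eq_smul_one, sub_mul, mul_add, smul_mul_assoc, mul_smul_comm,
    one_mul, mul_one] at hx
  simp only [add_mul, one_mul, smul_mul_assoc]
  linear_combination (norm := module) (a : K) • hx - ha • (x - (a : K) • (1 : H))

theorem quadratic_neg_inv {x : H} {a : Kˣ}
    (hx : (x - algebraMap K H a) * (x + algebraMap K H (a⁻¹ : Kˣ)) = 0) :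
    (x - algebraMap K H (-a⁻¹ : Kˣ)) * (x + algebraMap K H ((-a⁻¹)⁻¹ : Kˣ)) = 0 := by
  have hcomm : Commute (x - algebraMap K H a) (x + algebraMap K H (a⁻¹ : Kˣ)) :=
    ((Commute.refl x).sub_left (Algebra.commute_algebraMap_left _ x)).add_right
      (Algebra.commute_algebraMap_right _ _)
  rw [inv_neg, inv_inv, Units.val_neg, Units.val_neg, map_neg, map_neg, sub_neg_eq_add,
    ← sub_eq_add_neg, ← hcomm.eq, hx]

variable (cs) in
structure IsHeckeFamily (τ : W → Kˣ) (T : W → Hˣ) : Prop where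
  labelling : IsMultiplicativeLabelling cs τ
  multiplicative : IsMultiplicativeLabelling cs T
  quadratic : ∀ i, ((T (cs.simple i) : H) - algebraMap K H (τ (cs.simple i))) *
    ((T (cs.simple i) : H) + algebraMap K H ((τ (cs.simple i))⁻¹ : Kˣ)) = 0

variable [Fintype W]

noncomputable def weightedSum (τ : W → Kˣ) (T : W → Hˣ) : H := ∑ w, (τ w : K) • (T w : H)

variable {τ : W → Kˣ} {T : W → Hˣ}

theorem simple_mul_weightedSum (h : IsHeckeFamily cs τ T) (i : B) :
    (T (cs.simple i) : H) * weightedSum τ T = (τ (cs.simple i) : K) • weightedSum τ T := by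
  classical
  have hfactor : weightedSum τ T = (1 + (τ (cs.simple i) : K) • (T (cs.simple i) : H)) *
      ∑ w with ¬cs.IsLeftDescent w i, (τ w : K) • (T w : H) := by
    rw [weightedSum, Fintype.sum_eq_sum_filter_add_comp_of_involutive (¬cs.IsLeftDescent · i)
      (g := (cs.simple i * ·)) (fun w => cs.simple_mul_simple_cancel_left i)
      (fun w => by simp [← isLeftDescent_iff_not_isLeftDescent_mul]), Finset.mul_sum]
    refine Finset.sum_congr rfl fun w hw => ?_
    have hw := cs.not_isLeftDescent_iff.mp (Finset.mem_filter.mp hw).2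
    rw [h.labelling.map_simple_mul hw, h.multiplicative.map_simple_mul hw, Units.val_mul,
      Units.val_mul, add_mul, one_mul, smul_mul_smul_comm]
  rw [hfactor, ← mul_assoc, mul_one_add_smul_of_quadratic (h.quadratic i), smul_mul_assoc]

theorem weightedSum_mul_simple (h : IsHeckeFamily cs τ T) (i : B) :
    weightedSum τ T * (T (cs.simple i) : H) = (τ (cs.simple i) : K) • weightedSum τ T := by
  classical
  have hfactor : weightedSum τ T = (∑ w with ¬cs.IsRightDescent w i, (τ w : K) • (T w : H)) *
      (1 + (τ (cs.simple i) : K) • (T (cs.simple i) : H)) := by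
    rw [weightedSum, Fintype.sum_eq_sum_filter_add_comp_of_involutive (¬cs.IsRightDescent · i)
      (g := (· * cs.simple i)) (fun w => cs.simple_mul_simple_cancel_right i)
      (fun w => by simp [← isRightDescent_iff_not_isRightDescent_mul]), Finset.sum_mul]
    refine Finset.sum_congr rfl fun w hw => ?_
    have hw := cs.not_isRightDescent_iff.mp (Finset.mem_filter.mp hw).2
    rw [h.labelling.map_mul_simple hw, h.multiplicative.map_mul_simple hw, Units.val_mul,
      Units.val_mul, mul_add, mul_one, smul_mul_smul_comm]
  rw [hfactor, mul_assoc, one_add_smul_mul_of_quadratic (h.quadratic i), mul_smul_comm]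

theorem mul_weightedSum (h : IsHeckeFamily cs τ T) (w : W) :
    (T w : H) * weightedSum τ T = (τ w : K) • weightedSum τ T := by
  induction w using CoxeterSystem.induction_on_length_left cs with
  | one => rw [h.multiplicative.map_one, h.labelling.map_one]; simp
  | simple_mul w i hw ih =>
    rw [h.multiplicative.map_simple_mul hw, h.labelling.map_simple_mul hw, Units.val_mul,
      Units.val_mul, mul_assoc, ih, mul_smul_comm, simple_mul_weightedSum h, smul_smul, mul_comm]

theorem weightedSum_mul (h : IsHeckeFamily cs τ T) (w : W) :
    weightedSum τ T * (T w : H) = (τ w : K) • weightedSum τ T := by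
  induction w using CoxeterSystem.induction_on_length_right cs with
  | one => rw [h.multiplicative.map_one, h.labelling.map_one]; simp
  | mul_simple w i hw ih =>
    rw [h.multiplicative.map_mul_simple hw, h.labelling.map_mul_simple hw, Units.val_mul,
      Units.val_mul, ← mul_assoc, ih, smul_mul_assoc, weightedSum_mul_simple h, smul_smul]

theorem weightedSum_mul_self (h : IsHeckeFamily cs τ T) :
    weightedSum τ T * weightedSum τ T = (∑ w, (τ w : K) ^ 2) • weightedSum τ T := by
  conv_lhs => enter [1]; rw [weightedSum]
  simp only [Finset.sum_mul, smul_mul_assoc, mul_weightedSum h, smul_smul, ← sq, Finset.sum_smul]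

theorem weightedSum_mul_inv (h : IsHeckeFamily cs τ T) (w : W) :
    weightedSum τ T * (((T w)⁻¹ : Hˣ) : H) = (((τ w)⁻¹ : Kˣ) : K) • weightedSum τ T := by
  calc weightedSum τ T * (((T w)⁻¹ : Hˣ) : H)
      = (((τ w)⁻¹ * τ w : Kˣ) : K) • (weightedSum τ T * (((T w)⁻¹ : Hˣ) : H)) := by simp
    _ = (((τ w)⁻¹ : Kˣ) : K) • (weightedSum τ T * (T w : H) * (((T w)⁻¹ : Hˣ) : H)) := by
      rw [Units.val_mul, mul_smul, weightedSum_mul h, smul_mul_assoc]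
    _ = (((τ w)⁻¹ : Kˣ) : K) • weightedSum τ T := by rw [mul_assoc, Units.mul_inv, mul_one]

theorem sum_inv_smul_inv_eq_smul_weightedSum (h : IsHeckeFamily cs τ T) {u : W}
    (hu : ∀ w, cs.length w ≤ cs.length u) :
    ∑ w, (((τ w)⁻¹ : Kˣ) : K) • (((T w)⁻¹ : Hˣ) : H) =
      (((τ u)⁻¹ * (τ u)⁻¹ : Kˣ) : K) • weightedSum τ T := by
  have hterm : ∀ w, (((τ w)⁻¹ : Kˣ) : K) • (((T w)⁻¹ : Hˣ) : H) = (((τ u)⁻¹ : Kˣ) : K) •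
      (((τ (w⁻¹ * u) : K) • (T (w⁻¹ * u) : H)) * (((T u)⁻¹ : Hˣ) : H)) := fun w => by
    rw [h.labelling.inv_eq_mul_inv_of_forall_length_le hu,
      h.multiplicative.inv_eq_mul_inv_of_forall_length_le hu, Units.val_mul, Units.val_mul,
      smul_mul_assoc, smul_smul, mul_comm]
  have hreindex : ∑ w, (τ (w⁻¹ * u) : K) • (T (w⁻¹ * u) : H) = weightedSum τ T :=
    Equiv.sum_comp ((Equiv.inv W).trans (Equiv.mulRight u)) fun v => (τ v : K) • (T v : H)
  rw [Finset.sum_congr rfl fun w _ => hterm w, ← Finset.smul_sum, ← Finset.sum_mul, hreindex,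
    weightedSum_mul_inv h, smul_smul, Units.val_mul]

theorem map_weightedSum_of_forall_length_le (h : IsHeckeFamily cs τ T) {u : W}
    (hu : ∀ w, cs.length w ≤ cs.length u) {σ : K →+* K} {st : H → H}
    (hadd : ∀ x y, st (x + y) = st x + st y)
    (hsmul : ∀ (c : K) (x : H), st (algebraMap K H c * x) = algebraMap K H (σ c) * st x)
    (hσ : ∀ w, σ (τ w) = (((τ w)⁻¹ : Kˣ) : K)) (hst : ∀ w, st (T w) = (((T w)⁻¹ : Hˣ) : H)) :
    st (weightedSum τ T) = (((τ u)⁻¹ * (τ u)⁻¹ : Kˣ) : K) • weightedSum τ T := by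
  rw [← sum_inv_smul_inv_eq_smul_weightedSum h hu, weightedSum]
  change AddMonoidHom.mk' st hadd _ = _
  rw [map_sum]
  refine Finset.sum_congr rfl fun w _ => ?_
  rw [AddMonoidHom.mk'_apply, Algebra.smul_def, hsmul, hσ, hst, Algebra.smul_def]

end HeckeSymmetriser

theorem symmetriser_idempotent_and_selfadjoint_general
    {J : Type*} {W : Type*} [Group W] [Fintype W] {M : CoxeterMatrix J}
    (cs : CoxeterSystem M W)
    {K : Type*} [Field K] {H : Type*} [Ring H] [Algebra K H]
    (τ : W → Kˣ)
    (T : W → Hˣ)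
    (hT : ∀ v w : W, cs.length (v * w) = cs.length v + cs.length w → T (v * w) = T v * T w)
    (hquad : ∀ j : J, ((T (cs.simple j) : H) - algebraMap K H ((τ (cs.simple j) : K))) *
      ((T (cs.simple j) : H) + algebraMap K H (((τ (cs.simple j))⁻¹ : Kˣ) : K)) = 0)
    (ε : W →* ℤˣ)
    (τε : W → Kˣ)
    (hτε : ∀ v w : W, cs.length (v * w) = cs.length v + cs.length w → τε (v * w) = τε v * τε w)
    (hτεs : ∀ j : J, τε (cs.simple j) =
      if ε (cs.simple j) = 1 then τ (cs.simple j) else -(τ (cs.simple j))⁻¹)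
    (wJ : W) (hwJ : ∀ w : W, cs.length w ≤ cs.length wJ)
    (U : H)
    (hU : U = algebraMap K H (((τε wJ)⁻¹ : Kˣ) : K) *
      ∑ w : W, algebraMap K H ((τε w : K)) * (T w : H)) :
    U * U = algebraMap K H ((∑ w : W, ((τε w : K)) ^ 2) * (((τε wJ)⁻¹ : Kˣ) : K)) * U ∧
    (∀ (σ : K →+* K) (st : H → H),
      Function.Involutive σ →
      (∀ x y : H, st (x + y) = st x + st y) →
      (∀ x y : H, st (x * y) = st y * st x) →
      Function.Involutive st →
      (∀ (c : K) (x : H), st (algebraMap K H c * x) = algebraMap K H (σ c) * st x) →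
      (∀ w : W, σ ((τ w : K)) = (((τ w)⁻¹ : Kˣ) : K)) →
      (∀ w : W, st ((T w : H)) = (((T w)⁻¹ : Hˣ) : H)) →
      st U = U) := by
  have hHecke : IsHeckeFamily cs τε T := ⟨hτε, hT, fun j => by
    rw [hτεs j]
    split_ifs
    exacts [hquad j, quadratic_neg_inv (hquad j)]⟩
  have hU' : U = (((τε wJ)⁻¹ : Kˣ) : K) • weightedSum τε T := by
    simp only [hU, weightedSum, Algebra.smul_def, Finset.mul_sum]
  refine ⟨?_, fun σ st _ hadd _ _ hsmul hστ hstT => ?_⟩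
  · rw [hU', smul_mul_smul_comm, weightedSum_mul_self hHecke, smul_smul, ← Algebra.smul_def,
      smul_smul]
    congr 1
    ring
  · have hσε : (Units.map (σ : K →* K)) ∘ τε = fun w => (τε w)⁻¹ := by
      refine (hHecke.labelling.comp _).ext hHecke.labelling.inv fun j => Units.ext ?_
      simp only [Function.comp_apply, Units.coe_map, MonoidHom.coe_coe, hτεs j]
      split_ifs <;> simp [hστ]
    have hσε' : ∀ w, σ (τε w) = (((τε w)⁻¹ : Kˣ) : K) := fun w =>
      congrArg Units.val (congrFun hσε w)
    have hσc : σ (((τε wJ)⁻¹ : Kˣ) : K) = τε wJ := by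
      rw [Units.val_inv_eq_inv_val, map_inv₀, hσε', Units.val_inv_eq_inv_val, inv_inv]
    rw [hU', Algebra.smul_def, hsmul, map_weightedSum_of_forall_length_le hHecke hwJ hadd hsmul
      hσε' hstT, hσc, ← Algebra.smul_def, smul_smul, ← Units.val_mul, mul_inv_cancel_left,
      Algebra.smul_def]

/-- `(U^{(ε)})² = (W_J(τ^{(ε)2})/τ^{(ε)}(w_J)) · U^{(ε)}`; moreover, for any
involutive ring anti-automorphism `*` of `H`, semilinear over an involutive field
automorphism `*` of `K` with `τ(w)* = τ(w)⁻¹`, such that `T(w)* = T(w)⁻¹` for all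
`w ∈ W_J`, one has `(U^{(ε)})* = U^{(ε)}`. -/
theorem symmetriser_idempotent_and_selfadjoint
    {J : Type*} {W : Type*} [Group W] [Fintype W] {M : CoxeterMatrix J}
    (cs : CoxeterSystem M W)
    {K : Type*} [Field K] {H : Type*} [Ring H] [Algebra K H]
    (τ : W → Kˣ)
    (hτ : ∀ v w : W, cs.length (v * w) = cs.length v + cs.length w → τ (v * w) = τ v * τ w)
    (T : W → Hˣ)
    (hT : ∀ v w : W, cs.length (v * w) = cs.length v + cs.length w → T (v * w) = T v * T w)
    (hquad : ∀ j : J, ((T (cs.simple j) : H) - algebraMap K H ((τ (cs.simple j) : K))) *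
      ((T (cs.simple j) : H) + algebraMap K H (((τ (cs.simple j))⁻¹ : Kˣ) : K)) = 0)
    (ε : W →* ℤˣ)
    (τε : W → Kˣ)
    (hτε : ∀ v w : W, cs.length (v * w) = cs.length v + cs.length w → τε (v * w) = τε v * τε w)
    (hτεs : ∀ j : J, τε (cs.simple j) =
      if ε (cs.simple j) = 1 then τ (cs.simple j) else -(τ (cs.simple j))⁻¹)
    (wJ : W) (hwJ : ∀ w : W, cs.length w ≤ cs.length wJ)
    (U : H)
    (hU : U = algebraMap K H (((τε wJ)⁻¹ : Kˣ) : K) *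
      ∑ w : W, algebraMap K H ((τε w : K)) * (T w : H)) :
    U * U = algebraMap K H ((∑ w : W, ((τε w : K)) ^ 2) * (((τε wJ)⁻¹ : Kˣ) : K)) * U ∧
    (∀ (σ : K →+* K) (st : H → H),
      Function.Involutive σ →
      (∀ x y : H, st (x + y) = st x + st y) →
      (∀ x y : H, st (x * y) = st y * st x) →
      Function.Involutive st →
      (∀ (c : K) (x : H), st (algebraMap K H c * x) = algebraMap K H (σ c) * st x) →
      (∀ w : W, σ ((τ w : K)) = (((τ w)⁻¹ : Kˣ) : K)) →
      (∀ w : W, st ((T w : H)) = (((T w)⁻¹ : Hˣ) : H)) →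
      st U = U) :=
  symmetriser_idempotent_and_selfadjoint_general cs τ T hT hquad ε τε hτε hτεs wJ hwJ U hU
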